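/- Let ℓ ≥ 3, ν ≥ 0 and 0 ≤ t ≤ ν. Let Λ₁ = ℤ^t with standard basis τ₁, …, τ_t, let Λ₂ = ℤ^{ν−t}, and Λ = Λ₁ ⊕ Λ₂. Set S₁ := 2Λ₁ ∪ ⋃_{i=1}^{t} (τ_i + 2Λ₁) ⊆ Λ₁, S := {s₁ + λ₂ : s₁ ∈ S₁, λ₂ ∈ Λ₂} and L := 2Λ₁ ⊕ Λ₂. Let Ṙ ⊆ ℤ^ℓ be the root system of type B_ℓ, with short roots Ṙ_sh = {±e_i : 1 ≤ i ≤ ℓ} and long roots Ṙ_lg = {±e_i ± e_j : 1 ≤ i < j ≤ ℓ}. In ℤ^ℓ ⊕ Λ set R := ({0} ⊕ (S + S)) ∪ {α̇ + σ : α̇ ∈ Ṙ_sh, σ ∈ S} ∪ {β̇ + μ : β̇ ∈ Ṙ_lg, μ ∈ L}, with isotropic roots R⁰ = {0} ⊕ (S + S) and non-isotropic roots R^× = R ∖ R⁰. Then every core-character of R is a character: if ψ : R → ℂˣ satisfies ψ(α + β) = ψ(α)ψ(β) whenever α ∈ R^×, β ∈ R and α + β ∈ R, then ψ(α + β) = ψ(α)ψ(β)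 for all α, β ∈ R with α + β ∈ R. -/

import Mathlib

/-!
For isotropic `α, β` with `α + β ∈ R` pick a non-isotropic `γ = (e₁, (s, 0))` such that `γ + α` is
non-isotropic and `γ + α + β ∈ R`; three applications of the core-character property then give
`ψ γ * ψ (α + β) = ψ (γ + α + β) = ψ γ * ψ α * ψ β`. Modulo `2Λ₁`, the set `S₁` consists of the
points of Hamming weight at most one and `S₁ + S₁` of those of weight at most two, so finding `s`
amounts to finding a point of the Hamming cube within distance one of `0`, `α₁` and `α₁ + β₁`,
which are at mutual distance at most two.
-/

open scoped Pointwise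

def unitCosetSemilattice (ι : Type*) [DecidableEq ι] : Set (ι → ℤ) :=
  {x | (∃ y, x = (2 : ℤ) • y) ∨ ∃ i : ι, ∃ y, x = Pi.single i 1 + (2 : ℤ) • y}

section Parity

open Finset
open scoped symmDiff

theorem Finset.card_symmDiff_le {α : Type*} [DecidableEq α] (s u : Finset α) :
    #(s ∆ u) ≤ #s + #u :=
  (card_le_card symmDiff_le_sup).trans (card_union_le s u)

theorem Finset.card_singleton_symmDiff_le_one {α : Type*} [DecidableEq α] {s : Finset α} {i : α}
    (hi : i ∈ s) (hs : #s ≤ 2) : #({i} ∆ s) ≤ 1 := by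
  rw [symmDiff_of_le (singleton_subset_iff.2 hi), card_sdiff_of_subset (singleton_subset_iff.2 hi),
    card_singleton]
  omega

theorem Finset.exists_card_le_one_symmDiff {α : Type*} [DecidableEq α] {U W : Finset α}
    (hU : #U ≤ 2) (hW : #W ≤ 2) (hUW : #(U ∆ W) ≤ 2) :
    ∃ D : Finset α, #D ≤ 1 ∧ #(D ∆ U) ≤ 1 ∧ #(D ∆ W) ≤ 1 := by
  wlog hWU : #W ≤ #U generalizing U W
  · obtain ⟨D, hD, hDW, hDU⟩ := this hW hU (symmDiff_comm U W ▸ hUW) (by omega)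
    exact ⟨D, hD, hDU, hDW⟩
  by_cases hmeet : ∃ i ∈ U, i ∈ W
  · obtain ⟨i, hiU, hiW⟩ := hmeet
    exact ⟨{i}, (card_singleton i).le, card_singleton_symmDiff_le_one hiU hU,
      card_singleton_symmDiff_le_one hiW hW⟩
  have hdisj : Disjoint U W := disjoint_left.2 fun i hiU hiW => hmeet ⟨i, hiU, hiW⟩
  rw [hdisj.symmDiff_eq_sup, sup_eq_union, card_union_of_disjoint hdisj] at hUW
  by_cases hU1 : #U ≤ 1
  · exact ⟨⊥, by simp, by rwa [bot_symmDiff], by rw [bot_symmDiff]; omega⟩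
  obtain ⟨i, hi⟩ : U.Nonempty := card_pos.1 (by omega)
  have hW0 : W = ∅ := card_eq_zero.1 (by omega)
  exact ⟨{i}, (card_singleton i).le, card_singleton_symmDiff_le_one hi hU, by
    rw [hW0, ← bot_eq_empty, symmDiff_bot, card_singleton]⟩

variable {ι : Type*} [Fintype ι]

def oddPart (x : ι → ℤ) : Finset ι := {i | Odd (x i)}

@[simp]
theorem mem_oddPart {x : ι → ℤ} {i : ι} : i ∈ oddPart x ↔ Odd (x i) := by
  simp [oddPart]

theorem oddPart_add [DecidableEq ι] (x y : ι → ℤ) : oddPart (x + y) = oddPart x ∆ oddPart y := by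
  ext i
  simp only [mem_oddPart, Pi.add_apply, mem_symmDiff, Int.odd_add, ← Int.not_odd_iff_even]
  tauto

@[simp]
theorem oddPart_zero : oddPart (0 : ι → ℤ) = ∅ := by
  ext i
  simp

@[simp]
theorem oddPart_two_smul (y : ι → ℤ) : oddPart ((2 : ℤ) • y) = ∅ := by
  ext i
  simp

@[simp]
theorem oddPart_single [DecidableEq ι] (i : ι) : oddPart (Pi.single i (1 : ℤ)) = {i} := by
  ext j
  by_cases h : j = i <;> simp [h]

theorem oddPart_surjective : Function.Surjective (oddPart (ι := ι)) := by
  classical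
  intro D
  refine ⟨fun i => if i ∈ D then 1 else 0, ?_⟩
  ext i
  by_cases h : i ∈ D <;> simp [h]

theorem exists_eq_add_two_smul_of_oddPart_eq [DecidableEq ι] {x x' : ι → ℤ}
    (h : oddPart x = oddPart x') : ∃ y, x = x' + (2 : ℤ) • y := by
  have hdiff : oddPart (x - x') = ∅ := by
    rw [← bot_eq_empty, ← symmDiff_eq_left (a := oddPart x'), ← oddPart_add, add_sub_cancel, h]
  refine ⟨fun i => (x - x') i / 2, funext fun i => ?_⟩
  have heven : Even ((x - x') i) := by
    simpa using (Finset.ext_iff.1 hdiff i)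
  show x i = x' i + 2 * ((x - x') i / 2)
  rw [Int.mul_ediv_cancel' heven.two_dvd]
  exact (add_sub_cancel _ _).symm

variable [DecidableEq ι]

theorem mem_unitCosetSemilattice_iff {x : ι → ℤ} :
    x ∈ unitCosetSemilattice ι ↔ #(oddPart x) ≤ 1 := by
  constructor
  · rintro (⟨y, rfl⟩ | ⟨i, y, rfl⟩)
    · simp only [oddPart_two_smul, card_empty, zero_le]
    · rw [oddPart_add, oddPart_single, oddPart_two_smul, ← bot_eq_empty, symmDiff_bot,
        card_singleton]
  · intro hx
    rcases Nat.le_one_iff_eq_zero_or_eq_one.1 hx with h | h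
    · left
      simpa using
        exists_eq_add_two_smul_of_oddPart_eq (x' := 0) (by rw [oddPart_zero]; simpa using h)
    · obtain ⟨i, hi⟩ := card_eq_one.1 h
      exact Or.inr ⟨i, exists_eq_add_two_smul_of_oddPart_eq (by simpa using hi)⟩

theorem card_oddPart_le_two_of_mem_add {x : ι → ℤ}
    (hx : x ∈ unitCosetSemilattice ι + unitCosetSemilattice ι) : #(oddPart x) ≤ 2 := by
  obtain ⟨a, ha, b, hb, rfl⟩ := hx
  rw [mem_unitCosetSemilattice_iff] at ha hb
  rw [oddPart_add]
  exact (card_symmDiff_le _ _).trans (by omega)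

theorem exists_add_mem_unitCosetSemilattice {x y : ι → ℤ}
    (hx : x ∈ unitCosetSemilattice ι + unitCosetSemilattice ι)
    (hy : y ∈ unitCosetSemilattice ι + unitCosetSemilattice ι)
    (hxy : x + y ∈ unitCosetSemilattice ι + unitCosetSemilattice ι) :
    ∃ s ∈ unitCosetSemilattice ι, s + x ∈ unitCosetSemilattice ι ∧
      s + x + y ∈ unitCosetSemilattice ι := by
  have hy' : #(oddPart x ∆ oddPart (x + y)) ≤ 2 := by
    rw [oddPart_add, symmDiff_symmDiff_cancel_left]
    exact card_oddPart_le_two_of_mem_add hy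
  obtain ⟨D, hD, hDx, hDxy⟩ := exists_card_le_one_symmDiff (card_oddPart_le_two_of_mem_add hx)
    (card_oddPart_le_two_of_mem_add hxy) hy'
  obtain ⟨s, rfl⟩ := oddPart_surjective D
  simp only [mem_unitCosetSemilattice_iff, oddPart_add, symmDiff_assoc] at hD hDx hDxy ⊢
  exact ⟨s, hD, hDx, hDxy⟩

end Parity

section Character

variable {G M : Type*} [AddCommSemigroup G] [CancelCommMonoid M]

def IsCoreCharacter (R Rx : Set G) (ψ : G → M) : Prop :=
  ∀ α ∈ Rx, ∀ β ∈ R, α + β ∈ R → ψ (α + β) = ψ α * ψ β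

def IsCharacter (R : Set G) (ψ : G → M) : Prop :=
  ∀ α ∈ R, ∀ β ∈ R, α + β ∈ R → ψ (α + β) = ψ α * ψ β

theorem IsCoreCharacter.isCharacter {R R0 : Set G} {ψ : G → M}
    (hψ : IsCoreCharacter R (R \ R0) ψ)
    (hshift : ∀ α ∈ R0, ∀ β ∈ R0, α + β ∈ R →
      ∃ γ ∈ R \ R0, γ + α ∈ R \ R0 ∧ γ + α + β ∈ R) :
    IsCharacter R ψ := by
  intro α hα β hβ hαβ
  by_cases hα0 : α ∈ R0
  swap
  · exact hψ α ⟨hα, hα0⟩ β hβ hαβ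
  by_cases hβ0 : β ∈ R0
  swap
  · rw [add_comm, mul_comm]
    exact hψ β ⟨hβ, hβ0⟩ α hα (add_comm α β ▸ hαβ)
  obtain ⟨γ, hγ, hγα, hγαβ⟩ := hshift α hα0 β hβ0 hαβ
  apply mul_left_cancel (a := ψ γ)
  calc ψ γ * ψ (α + β) = ψ (γ + α + β) := by
        rw [add_assoc, hψ γ hγ _ hαβ (add_assoc γ α β ▸ hγαβ)]
    _ = ψ γ * (ψ α * ψ β) := by
        rw [hψ _ hγα β hβ hγαβ, hψ γ hγ α hα hγα.1, mul_assoc]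

end Character

def shortRoots (ι : Type*) [DecidableEq ι] : Set (ι → ℤ) :=
  {v | ∃ i : ι, ∃ a : ℤ, (a = 1 ∨ a = -1) ∧ v = a • Pi.single i 1}

def longRoots (ι : Type*) [DecidableEq ι] : Set (ι → ℤ) :=
  {v | ∃ i j : ι, i ≠ j ∧ ∃ a b : ℤ, (a = 1 ∨ a = -1) ∧
    (b = 1 ∨ b = -1) ∧ v = a • Pi.single i 1 + b • Pi.single j 1}

section RootSystem

variable {ι : Type*} [DecidableEq ι]

theorem single_mem_shortRoots (i : ι) : Pi.single i 1 ∈ shortRoots ι :=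
  ⟨i, 1, Or.inl rfl, (one_smul ℤ _).symm⟩

theorem zero_notMem_shortRoots : (0 : ι → ℤ) ∉ shortRoots ι := by
  rintro ⟨i, a, ha, h⟩
  have := congr_fun h i
  rcases ha with rfl | rfl <;> simp at this

theorem zero_notMem_longRoots : (0 : ι → ℤ) ∉ longRoots ι := by
  rintro ⟨i, j, hij, a, b, ha, -, h⟩
  have := congr_fun h i
  rcases ha with rfl | rfl <;> simp [hij] at this

end RootSystem

theorem stmt7_general (ℓ ν t : ℕ) (hℓ : 3 ≤ ℓ)
    (S1 : Set (Fin t → ℤ))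
    (hS1 : S1 = {x | (∃ y, x = (2 : ℤ) • y) ∨
      ∃ i : Fin t, ∃ y, x = Pi.single i 1 + (2 : ℤ) • y})
    (S Lset : Set ((Fin t → ℤ) × (Fin (ν - t) → ℤ)))
    (hS : S = {q | q.1 ∈ S1})
    (Rsh Rlg : Set (Fin ℓ → ℤ))
    (hRsh : Rsh = {v | ∃ i : Fin ℓ, ∃ a : ℤ, (a = 1 ∨ a = -1) ∧ v = a • Pi.single i 1})
    (hRlg : Rlg = {v | ∃ i j : Fin ℓ, i ≠ j ∧ ∃ a b : ℤ, (a = 1 ∨ a = -1) ∧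
      (b = 1 ∨ b = -1) ∧ v = a • Pi.single i 1 + b • Pi.single j 1})
    (R R0 Rx : Set ((Fin ℓ → ℤ) × ((Fin t → ℤ) × (Fin (ν - t) → ℤ))))
    (hR : R = {p | (p.1 = 0 ∧ p.2 ∈ S + S) ∨ (p.1 ∈ Rsh ∧ p.2 ∈ S) ∨
      (p.1 ∈ Rlg ∧ p.2 ∈ Lset)})
    (hR0 : R0 = {p | p.1 = 0 ∧ p.2 ∈ S + S})
    (hRx : Rx = R \ R0)
    (ψ : (Fin ℓ → ℤ) × ((Fin t → ℤ) × (Fin (ν - t) → ℤ)) → ℂˣ)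
    (hcore : ∀ α ∈ Rx, ∀ β ∈ R, α + β ∈ R → ψ (α + β) = ψ α * ψ β) :
    ∀ α ∈ R, ∀ β ∈ R, α + β ∈ R → ψ (α + β) = ψ α * ψ β := by
  change _ = shortRoots (Fin ℓ) at hRsh
  change _ = longRoots (Fin ℓ) at hRlg
  change _ = unitCosetSemilattice (Fin t) at hS1
  subst hS1 hRsh hRlg hRx
  have fst_mem {q} (hq : q ∈ S + S) :
      q.1 ∈ unitCosetSemilattice (Fin t) + unitCosetSemilattice (Fin t) :=
    by subst hS; exact Set.preimage_add_preimage_subset (AddMonoidHom.fst _ _) hq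
  have mem_Rx (q : (Fin t → ℤ) × (Fin (ν - t) → ℤ)) (hq : q.1 ∈ unitCosetSemilattice (Fin t)) :
      (Pi.single ⟨0, by omega⟩ 1, q) ∈ R \ R0 :=
    ⟨hR ▸ Or.inr (Or.inl ⟨single_mem_shortRoots _, hS ▸ hq⟩), fun h => by simp [hR0] at h⟩
  refine IsCoreCharacter.isCharacter hcore ?_
  rintro ⟨_, α⟩ hα ⟨_, β⟩ hβ hαβ
  obtain ⟨rfl, hα⟩ := hR0 ▸ hα
  obtain ⟨rfl, hβ⟩ := hR0 ▸ hβ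
  replace hαβ : α + β ∈ S + S := by
    rw [hR] at hαβ
    rcases hαβ with h | h | h
    · exact h.2
    · exact absurd (by simpa using h.1) zero_notMem_shortRoots
    · exact absurd (by simpa using h.1) zero_notMem_longRoots
  obtain ⟨s, hs, hsα, hsαβ⟩ :=
    exists_add_mem_unitCosetSemilattice (fst_mem hα) (fst_mem hβ) (fst_mem hαβ)
  refine ⟨_, mem_Rx (s, 0) hs, ?_, ?_⟩
  · simpa using mem_Rx _ hsα
  · simpa using (mem_Rx _ hsαβ).1

/-- Let `ℓ ≥ 3`, `0 ≤ t ≤ ν`, `Λ₁ = ℤ^t`, `Λ₂ = ℤ^{ν-t}`, `Λ = Λ₁ ⊕ Λ₂`,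
`S₁ = 2Λ₁ ∪ ⋃ᵢ (τᵢ + 2Λ₁)` (τᵢ the standard basis of `Λ₁`), `S = S₁ ⊕ Λ₂`, `L = 2Λ₁ ⊕ Λ₂`.
For the type-`B_ℓ`, twist number `t`, index-`0` extended affine root system
`R = ({0} ⊕ (S+S)) ∪ (Ṙ_sh + S) ∪ (Ṙ_lg + L)` every core-character is a character. -/
theorem stmt7 (ℓ ν t : ℕ) (hℓ : 3 ≤ ℓ) (htν : t ≤ ν)
    (S1 : Set (Fin t → ℤ))
    (hS1 : S1 = {x | (∃ y, x = (2 : ℤ) • y) ∨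
      ∃ i : Fin t, ∃ y, x = Pi.single i 1 + (2 : ℤ) • y})
    (S Lset : Set ((Fin t → ℤ) × (Fin (ν - t) → ℤ)))
    (hS : S = {q | q.1 ∈ S1})
    (hLset : Lset = {q | ∃ y, q.1 = (2 : ℤ) • y})
    (Rsh Rlg : Set (Fin ℓ → ℤ))
    (hRsh : Rsh = {v | ∃ i : Fin ℓ, ∃ a : ℤ, (a = 1 ∨ a = -1) ∧ v = a • Pi.single i 1})
    (hRlg : Rlg = {v | ∃ i j : Fin ℓ, i ≠ j ∧ ∃ a b : ℤ, (a = 1 ∨ a = -1) ∧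
      (b = 1 ∨ b = -1) ∧ v = a • Pi.single i 1 + b • Pi.single j 1})
    (R R0 Rx : Set ((Fin ℓ → ℤ) × ((Fin t → ℤ) × (Fin (ν - t) → ℤ))))
    (hR : R = {p | (p.1 = 0 ∧ p.2 ∈ S + S) ∨ (p.1 ∈ Rsh ∧ p.2 ∈ S) ∨
      (p.1 ∈ Rlg ∧ p.2 ∈ Lset)})
    (hR0 : R0 = {p | p.1 = 0 ∧ p.2 ∈ S + S})
    (hRx : Rx = R \ R0)
    (ψ : (Fin ℓ → ℤ) × ((Fin t → ℤ) × (Fin (ν - t) → ℤ)) → ℂˣ)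
    (hcore : ∀ α ∈ Rx, ∀ β ∈ R, α + β ∈ R → ψ (α + β) = ψ α * ψ β) :
    ∀ α ∈ R, ∀ β ∈ R, α + β ∈ R → ψ (α + β) = ψ α * ψ β :=
  stmt7_general ℓ ν t hℓ S1 hS1 S Lset hS Rsh Rlg hRsh hRlg R R0 Rx hR hR0 hRx ψ hcore
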